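/- If two permutations π and σ of equal length are equivalent under the bidirectional replacement 123 ↔ 132 (here 123 and 132 are ★-patterns containing no ★, so each such replacement preserves length), then π and σ are equivalent under the bidirectional replacement 123 ↔ 1★2. -/

import Mathlib

/-!
Pattern-replacement equivalences between permutations of different lengths
(arXiv:1309.4802). A ★-pattern is encoded as a `List (Option ℕ)`, where `none`
is the placeholder ★ and `some k` an integer entry.
-/

/-- A ★-pattern / star-string entry: `none` is ★, `some k` an integer `k`. -/
abbrev SPat := List (Option ℕ)

/-- The integer entries of a star-string, in order. -/
def ints (ρ : SPat) : List ℕ := ρ.filterMap id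

/-- Two lists of naturals are order-isomorphic. -/
def OrdIso (u v : List ℕ) : Prop :=
  u.length = v.length ∧
  ∀ i j, i < u.length → j < u.length → (u.getD i 0 < u.getD j 0 ↔ v.getD i 0 < v.getD j 0)

/-- A valid string of distinct positive integers and ★'s. -/
def StarStr (ρ : SPat) : Prop := (ints ρ).Nodup ∧ ∀ k ∈ ints ρ, 0 < k

/-- `r` (entry by entry) forms a copy of the ★-pattern `δ`: ★'s in the same
positions, and the integer entries order-isomorphic. -/
def IsCopy (r δ : SPat) : Prop :=
  r.length = δ.length ∧
  (∀ i, (r.getD i none = none ↔ δ.getD i none = none)) ∧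
  OrdIso (ints r) (ints δ)

/-- `Repl a b ρ₁ ρ₂` : `ρ₂` is obtained from `ρ₁` by replacing an occurrence of `a`
as a (not necessarily contiguous) substring of `ρ₁` by `b`, entry by entry at the
same positions. -/
inductive Repl : SPat → SPat → SPat → SPat → Prop
  | nil : Repl [] [] [] []
  | keep {a b ρ₁ ρ₂} (x : Option ℕ) : Repl a b ρ₁ ρ₂ → Repl a b (x :: ρ₁) (x :: ρ₂)
  | repl {a b ρ₁ ρ₂} (x y : Option ℕ) :
      Repl a b ρ₁ ρ₂ → Repl (x :: a) (y :: b) (x :: ρ₁) (y :: ρ₂)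

/-- `π` is a permutation of `1, …, n` (as a list). -/
def IsPermList (π : List ℕ) : Prop := π.Perm (List.range' 1 π.length)

/-- `σ` is a result of the replacement `α → β` applied to the permutation `π`:
(1) `ρ₁` is `π` renumbered (order-isomorphically) with ★'s inserted anywhere;
(2) a substring `a` of `ρ₁` forming a copy of `α` is replaced (in place) by a
string `b` that is a copy of `β`, whose integers meet `ρ₁` only inside `a`, and
which agrees with `a` on the integer entries common to `α` and `β`;
(3) dropping ★'s and renumbering gives the permutation `σ`. -/
def IsResult (α β : SPat) (π σ : List ℕ) : Prop :=
  ∃ ρ₁ ρ₂ a b : SPat,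
    StarStr ρ₁ ∧ OrdIso π (ints ρ₁) ∧
    IsCopy a α ∧
    StarStr b ∧ IsCopy b β ∧
    (∀ k ∈ ints b, k ∈ ints ρ₁ → k ∈ ints a) ∧
    (∀ i j x, α.getD i none = some x → β.getD j none = some x →
      a.getD i none = b.getD j none) ∧
    Repl a b ρ₁ ρ₂ ∧
    IsPermList σ ∧ OrdIso (ints ρ₂) σ

/-- Equivalence under the bidirectional replacement `α ↔ β`: a finite sequence
of `α → β` and `β → α` replacements. -/
def PermEquiv (α β : SPat) (π σ : List ℕ) : Prop :=
  Relation.ReflTransGen (fun τ υ => IsResult α β τ υ ∨ IsResult β α τ υ) π σ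

/-- `π` is isolated under `α ↔ β`: no other permutation is equivalent to it. -/
def Isolated (α β : SPat) (π : List ℕ) : Prop :=
  ∀ σ : List ℕ, IsPermList σ → PermEquiv α β π σ → σ = π

/-- The identity permutation `1 2 ⋯ n`. -/
def idPerm (n : ℕ) : List ℕ := List.range' 1 n

/-- The reverse identity permutation `n (n-1) ⋯ 1`. -/
def ridPerm (n : ℕ) : List ℕ := (List.range' 1 n).reverse

def pat123 : SPat := [some 1, some 2, some 3]
def pat132 : SPat := [some 1, some 3, some 2]
def patS32 : SPat := [none, some 3, some 2]
def pat3S2 : SPat := [some 3, none, some 2]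
def pat32S : SPat := [some 3, some 2, none]
def patS31 : SPat := [none, some 3, some 1]
def pat3S1 : SPat := [some 3, none, some 1]
def pat31S : SPat := [some 3, some 1, none]
def patS21 : SPat := [none, some 2, some 1]
def pat2S1 : SPat := [some 2, none, some 1]
def pat21S : SPat := [some 2, some 1, none]
def pat12S : SPat := [some 1, some 2, none]
def pat1S3 : SPat := [some 1, none, some 3]
def patS23 : SPat := [none, some 2, some 3]
def patS12 : SPat := [none, some 1, some 2]
def pat23S : SPat := [some 2, some 3, none]
def pat13S : SPat := [some 1, some 3, none]
def pat1S2 : SPat := [some 1, none, some 2]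

/-!
A `123 → 132` replacement turns an occurrence `x m w` with `x < m < w` into `x w m`, and a
`132 → 123` replacement does the same to an occurrence with `x < w < m`; all that matters is
that `x` is smaller than both other entries. Such a move is simulated by two `1★2`-moves.
First insert a ★ just before `m`, read `x ★ w` as a copy of `1★2`, and replace it by the copy
`x w Z` of `123`, where `Z` is a new maximum put at the old position of `w`. Then `x m Z` is a
copy of `123`; replacing it by `x ★ m` deletes `Z` and moves `m` to the old position of `w`.
-/

@[simp] lemma ints_nil : ints ([] : SPat) = [] := rfl

@[simp] lemma ints_cons_some (k : ℕ) (ρ : SPat) : ints (some k :: ρ) = k :: ints ρ := rfl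

@[simp] lemma ints_cons_none (ρ : SPat) : ints (none :: ρ) = ints ρ := rfl

@[simp] lemma ints_append (ρ ρ' : SPat) : ints (ρ ++ ρ') = ints ρ ++ ints ρ' :=
  List.filterMap_append

lemma OrdIso.symm {u v : List ℕ} (h : OrdIso u v) : OrdIso v u :=
  ⟨h.1.symm, fun i j hi hj => (h.2 i j (h.1 ▸ hi) (h.1 ▸ hj)).symm⟩

lemma ordIso_triple_iff {u v w p q r : ℕ} :
    OrdIso [u, v, w] [p, q, r] ↔
      (u < v ↔ p < q) ∧ (v < u ↔ q < p) ∧ (v < w ↔ q < r) ∧ (w < v ↔ r < q) ∧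
        (u < w ↔ p < r) ∧ (w < u ↔ r < p) := by
  constructor
  · intro h
    exact ⟨h.2 0 1 (by simp) (by simp), h.2 1 0 (by simp) (by simp),
      h.2 1 2 (by simp) (by simp), h.2 2 1 (by simp) (by simp),
      h.2 0 2 (by simp) (by simp), h.2 2 0 (by simp) (by simp)⟩
  · rintro ⟨h01, h10, h12, h21, h02, h20⟩
    refine ⟨rfl, fun i j hi hj => ?_⟩
    simp only [List.length_cons, List.length_nil] at hi hj
    interval_cases i <;> interval_cases j <;> simp [*]

lemma ordIso_triple_123_iff {u v w : ℕ} : OrdIso [u, v, w] [1, 2, 3] ↔ u < v ∧ v < w := by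
  rw [ordIso_triple_iff]
  constructor <;> intro h <;> omega

lemma ordIso_triple_132_iff {u v w : ℕ} : OrdIso [u, v, w] [1, 3, 2] ↔ u < w ∧ w < v := by
  rw [ordIso_triple_iff]
  constructor <;> intro h <;> omega

lemma isCopy_triple_iff {a : SPat} {p q r : ℕ} :
    IsCopy a [some p, some q, some r] ↔
      ∃ u v w, a = [some u, some v, some w] ∧ OrdIso [u, v, w] [p, q, r] := by
  constructor
  · rintro ⟨hlen, hstar, hiso⟩
    rcases a with _ | ⟨o₁, _ | ⟨o₂, _ | ⟨o₃, _ | _⟩⟩⟩ <;> simp only [List.length_cons,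
      List.length_nil] at hlen <;> try omega
    rcases o₁ with _ | u
    · simpa using hstar 0
    rcases o₂ with _ | v
    · simpa using hstar 1
    rcases o₃ with _ | w
    · simpa using hstar 2
    exact ⟨u, v, w, rfl, by simpa [ints] using hiso⟩
  · rintro ⟨u, v, w, rfl, hiso⟩
    refine ⟨rfl, fun i => ?_, by simpa [ints] using hiso⟩
    rcases i with _ | _ | _ | i <;> simp

lemma isCopy_1S2 {u w : ℕ} (h : u < w) : IsCopy [some u, none, some w] pat1S2 := by
  refine ⟨rfl, fun i => ?_, ⟨rfl, fun i j hi hj => ?_⟩⟩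
  · rcases i with _ | _ | _ | i <;> simp [pat1S2]
  · simp only [ints, pat1S2, List.filterMap, id, List.length_cons, List.length_nil] at hi hj ⊢
    interval_cases i <;> interval_cases j <;> simp [h, h.le]

namespace Repl

lemma nil_self (ρ : SPat) : Repl [] [] ρ ρ := by
  induction ρ with
  | nil => exact .nil
  | cons x ρ ih => exact .keep x ih

lemma append_left (A : SPat) {a b ρ₁ ρ₂ : SPat} (h : Repl a b ρ₁ ρ₂) :
    Repl a b (A ++ ρ₁) (A ++ ρ₂) := by
  induction A with
  | nil => exact h
  | cons x A ih => exact .keep x ih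

lemma eq_of_nil {a b ρ₁ ρ₂ : SPat} (h : Repl a b ρ₁ ρ₂) (ha : a = []) : ρ₁ = ρ₂ := by
  induction h with
  | nil => rfl
  | keep x _ ih => rw [ih ha]
  | repl => simp at ha

lemma exists_of_cons {x y : Option ℕ} {a b ρ₁ ρ₂ : SPat} (h : Repl (x :: a) (y :: b) ρ₁ ρ₂) :
    ∃ A ρ₁' ρ₂', ρ₁ = A ++ x :: ρ₁' ∧ ρ₂ = A ++ y :: ρ₂' ∧ Repl a b ρ₁' ρ₂' := by
  generalize ha : x :: a = a' at h
  generalize hb : y :: b = b' at h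
  induction h with
  | nil => simp at ha
  | keep z _ ih =>
      obtain ⟨A, ρ₁', ρ₂', rfl, rfl, h⟩ := ih ha hb
      exact ⟨z :: A, ρ₁', ρ₂', rfl, rfl, h⟩
  | repl x' y' h =>
      obtain ⟨rfl, rfl⟩ := List.cons_eq_cons.mp ha.symm
      obtain ⟨rfl, rfl⟩ := List.cons_eq_cons.mp hb.symm
      exact ⟨[], _, _, rfl, rfl, h⟩

end Repl

lemma repl_triple_iff {o₁ o₂ o₃ u₁ u₂ u₃ : Option ℕ} {ρ₁ ρ₂ : SPat} :
    Repl [o₁, o₂, o₃] [u₁, u₂, u₃] ρ₁ ρ₂ ↔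
      ∃ A B C D, ρ₁ = A ++ o₁ :: B ++ o₂ :: C ++ o₃ :: D ∧
        ρ₂ = A ++ u₁ :: B ++ u₂ :: C ++ u₃ :: D := by
  constructor
  · intro h
    obtain ⟨A, _, _, rfl, rfl, h₂₃⟩ := h.exists_of_cons
    obtain ⟨B, _, _, rfl, rfl, h₃⟩ := h₂₃.exists_of_cons
    obtain ⟨C, D, _, rfl, rfl, h₀⟩ := h₃.exists_of_cons
    obtain rfl := h₀.eq_of_nil rfl
    exact ⟨A, B, C, D, by simp, by simp⟩
  · rintro ⟨A, B, C, D, rfl, rfl⟩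
    simpa using (((Repl.nil_self D).repl o₃ u₃).append_left C |>.repl o₂ u₂ |>.append_left B
      |>.repl o₁ u₁).append_left A

def rank (l : List ℕ) (v : ℕ) : ℕ := l.countP (· < v)

lemma rank_le_rank (l : List ℕ) {u v : ℕ} (h : u ≤ v) : rank l u ≤ rank l v :=
  List.countP_mono_left fun a _ hau => by simp only [decide_eq_true_eq] at hau ⊢; omega

lemma rank_lt_rank {l : List ℕ} {u v : ℕ} (hu : u ∈ l) (h : u < v) : rank l u < rank l v := by
  induction l with
  | nil => simp at hu
  | cons a l ih =>
      simp only [rank, List.countP_cons, decide_eq_true_eq] at ih ⊢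
      rcases List.mem_cons.mp hu with rfl | hu
      · have := rank_le_rank l h.le
        simp only [rank] at this
        split_ifs <;> omega
      · have := ih hu
        split_ifs <;> omega

lemma rank_lt_length {l : List ℕ} {v : ℕ} (hv : v ∈ l) : rank l v < l.length :=
  List.countP_lt_length_iff.mpr ⟨v, hv, by simp⟩

lemma rank_lt_rank_iff {l : List ℕ} {u v : ℕ} (hu : u ∈ l) : rank l u < rank l v ↔ u < v :=
  ⟨fun h => by by_contra! hvu; exact (rank_le_rank l hvu).not_gt h, rank_lt_rank hu⟩

def standardize (l : List ℕ) : List ℕ := l.map (rank l · + 1)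

lemma ordIso_standardize (l : List ℕ) : OrdIso l (standardize l) := by
  refine ⟨by simp [standardize], fun i j hi hj => ?_⟩
  have hi' : i < (standardize l).length := by simpa [standardize] using hi
  have hj' : j < (standardize l).length := by simpa [standardize] using hj
  rw [List.getD_eq_getElem _ _ hi, List.getD_eq_getElem _ _ hj, List.getD_eq_getElem _ _ hi',
    List.getD_eq_getElem _ _ hj']
  simp only [standardize, List.getElem_map, Nat.add_lt_add_iff_right]
  exact (rank_lt_rank_iff (List.getElem_mem hi)).symm

lemma isPermList_standardize {l : List ℕ} (hl : l.Nodup) : IsPermList (standardize l) := by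
  have hnodup : (standardize l).Nodup := hl.map_on fun u hu v hv huv => by
    by_contra hne
    rcases Nat.lt_or_gt_of_ne hne with h | h
    · have := rank_lt_rank hu h; omega
    · have := rank_lt_rank hv h; omega
  have hsub : standardize l ⊆ List.range' 1 (standardize l).length := by
    intro k hk
    obtain ⟨v, hv, rfl⟩ := List.mem_map.mp hk
    have := rank_lt_length hv
    simp only [standardize, List.length_map, List.mem_range'_1]
    omega
  exact (List.subperm_of_subset hnodup hsub).perm_of_length_le (by simp)

lemma StarStr.of_perm_cons {ρ ρ' : SPat} {Z : ℕ} (hρ : StarStr ρ)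
    (hperm : (ints ρ').Perm (Z :: ints ρ)) (hZ : Z ∉ ints ρ) (hZ₀ : 0 < Z) : StarStr ρ' :=
  ⟨hperm.nodup_iff.mpr (List.nodup_cons.mpr ⟨hZ, hρ.1⟩), fun k hk => by
    rcases List.mem_cons.mp (hperm.mem_iff.mp hk) with rfl | hk
    exacts [hZ₀, hρ.2 k hk]⟩

lemma agree_on_common_1S2_123 (x w Z i j k : ℕ) (hi : pat1S2.getD i none = some k)
    (hj : pat123.getD j none = some k) :
    ([some x, none, some w] : SPat).getD i none =
      ([some x, some w, some Z] : SPat).getD j none := by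
  rcases i with _ | _ | _ | i <;> rcases j with _ | _ | _ | j <;>
    simp [pat1S2, pat123] at hi hj ⊢ <;> omega

lemma agree_on_common_123_1S2 (x m Z i j k : ℕ) (hi : pat123.getD i none = some k)
    (hj : pat1S2.getD j none = some k) :
    ([some x, some m, some Z] : SPat).getD i none =
      ([some x, none, some m] : SPat).getD j none := by
  rcases i with _ | _ | _ | i <;> rcases j with _ | _ | _ | j <;>
    simp [pat1S2, pat123] at hi hj ⊢ <;> omega

lemma isResult_1S2_123_of_lt_fresh {A B C D : SPat} {x w Z : ℕ} {τ : List ℕ} (hxw : x < w)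
    (hρ : StarStr (A ++ some x :: B ++ C ++ some w :: D))
    (hτ : OrdIso τ (ints (A ++ some x :: B ++ C ++ some w :: D)))
    (hZ : ∀ k ∈ ints (A ++ some x :: B ++ C ++ some w :: D), k < Z)
    (hρ' : StarStr (A ++ some x :: B ++ some w :: C ++ some Z :: D)) :
    IsResult pat1S2 pat123 τ
      (standardize (ints (A ++ some x :: B ++ some w :: C ++ some Z :: D))) := by
  have hints : ints (A ++ some x :: B ++ none :: C ++ some w :: D) =
      ints (A ++ some x :: B ++ C ++ some w :: D) := by simp
  have hx₀ : 0 < x := hρ.2 x (by simp)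
  have hwZ : w < Z := hZ w (by simp)
  refine ⟨_, _, [some x, none, some w], [some x, some w, some Z], by rwa [StarStr, hints],
    by rwa [hints], isCopy_1S2 hxw, ⟨by simp; omega, by simp; omega⟩,
    isCopy_triple_iff.mpr ⟨x, w, Z, rfl, ordIso_triple_123_iff.mpr ⟨hxw, hwZ⟩⟩, ?_,
    agree_on_common_1S2_123 x w Z, repl_triple_iff.mpr ⟨A, B, C, D, rfl, rfl⟩,
    isPermList_standardize hρ'.1, ordIso_standardize _⟩
  intro k hk hkρ
  rw [hints] at hkρ
  have : k ≠ Z := fun hkZ => (hZ k hkρ).ne hkZ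
  simp only [ints_cons_some, ints_cons_none, ints_nil, List.mem_cons] at hk ⊢
  tauto

lemma isResult_123_1S2_of_lt {A B C D : SPat} {x m Z : ℕ} {μ υ : List ℕ} (hxm : x < m)
    (hmZ : m < Z) (hρ : StarStr (A ++ some x :: B ++ some m :: C ++ some Z :: D))
    (hμ : OrdIso μ (ints (A ++ some x :: B ++ some m :: C ++ some Z :: D)))
    (hυ : IsPermList υ) (hυρ : OrdIso (ints (A ++ some x :: B ++ C ++ some m :: D)) υ) :
    IsResult pat123 pat1S2 μ υ := by
  have hx₀ : 0 < x := hρ.2 x (by simp)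
  refine ⟨_, A ++ some x :: B ++ none :: C ++ some m :: D, [some x, some m, some Z],
    [some x, none, some m], hρ, hμ,
    isCopy_triple_iff.mpr ⟨x, m, Z, rfl, ordIso_triple_123_iff.mpr ⟨hxm, hmZ⟩⟩,
    ⟨by simp; omega, by simp; omega⟩, isCopy_1S2 hxm, fun k hk _ => by simp at hk ⊢; tauto,
    agree_on_common_123_1S2 x m Z, repl_triple_iff.mpr ⟨A, B, C, D, rfl, rfl⟩, hυ,
    by simpa using hυρ⟩

lemma permEquiv_123_1S2_of_swap {A B C D : SPat} {x m w : ℕ} {τ υ : List ℕ} (hxm : x < m)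
    (hxw : x < w) (hρ : StarStr (A ++ some x :: B ++ some m :: C ++ some w :: D))
    (hτ : OrdIso τ (ints (A ++ some x :: B ++ some m :: C ++ some w :: D)))
    (hυ : IsPermList υ) (hυρ : OrdIso (ints (A ++ some x :: B ++ some w :: C ++ some m :: D)) υ) :
    PermEquiv pat123 pat1S2 τ υ := by
  set ρ := A ++ some x :: B ++ some m :: C ++ some w :: D
  obtain ⟨Z, hZ⟩ : ∃ Z, ∀ k ∈ ints ρ, k < Z :=
    ⟨(ints ρ).sum + 1, fun k hk => Nat.lt_succ_of_le (List.le_sum_of_mem hk)⟩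
  set ρ' := A ++ some x :: B ++ some w :: some m :: C ++ some Z :: D
  have hρ' : StarStr ρ' := by
    refine hρ.of_perm_cons (Z := Z) (List.perm_iff_count.mpr fun k => ?_)
      (fun hZρ => (hZ Z hZρ).false) ((Nat.zero_le w).trans_lt (hZ w (by simp [ρ])))
    simp only [ρ, ρ', ints_append, ints_cons_some, List.count_append, List.count_cons]
    omega
  have hρ'_eq : ρ' = A ++ some x :: (B ++ [some w]) ++ some m :: C ++ some Z :: D := by simp [ρ']
  have step₁ : IsResult pat1S2 pat123 τ (standardize (ints ρ')) :=
    isResult_1S2_123_of_lt_fresh (C := some m :: C) hxw hρ hτ hZ hρ'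
  have step₂ : IsResult pat123 pat1S2 (standardize (ints ρ')) υ := by
    rw [hρ'_eq] at hρ' ⊢
    exact isResult_123_1S2_of_lt hxm (hZ m (by simp [ρ])) hρ' (ordIso_standardize _).symm hυ
      (by simpa using hυρ)
  exact .head (.inr step₁) (.single (.inl step₂))

lemma permEquiv_123_1S2_of_isResult_123_132 {τ υ : List ℕ} (h : IsResult pat123 pat132 τ υ) :
    PermEquiv pat123 pat1S2 τ υ := by
  obtain ⟨ρ₁, ρ₂, a, b, hρ₁, hτ, ha, -, hb, -, hcommon, hrepl, hυ, hυρ⟩ := h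
  obtain ⟨x, m, w, rfl, hxmw⟩ := isCopy_triple_iff.mp ha
  obtain ⟨_, _, _, rfl, -⟩ := isCopy_triple_iff.mp hb
  obtain ⟨hxm, hmw⟩ := ordIso_triple_123_iff.mp hxmw
  obtain ⟨rfl⟩ : some x = _ := hcommon 0 0 1 rfl rfl
  obtain ⟨rfl⟩ : some m = _ := hcommon 1 2 2 rfl rfl
  obtain ⟨rfl⟩ : some w = _ := hcommon 2 1 3 rfl rfl
  obtain ⟨A, B, C, D, rfl, rfl⟩ := repl_triple_iff.mp hrepl
  exact permEquiv_123_1S2_of_swap hxm (hxm.trans hmw) hρ₁ hτ hυ hυρ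

lemma permEquiv_123_1S2_of_isResult_132_123 {τ υ : List ℕ} (h : IsResult pat132 pat123 τ υ) :
    PermEquiv pat123 pat1S2 τ υ := by
  obtain ⟨ρ₁, ρ₂, a, b, hρ₁, hτ, ha, -, hb, -, hcommon, hrepl, hυ, hυρ⟩ := h
  obtain ⟨x, m, w, rfl, hxwm⟩ := isCopy_triple_iff.mp ha
  obtain ⟨_, _, _, rfl, -⟩ := isCopy_triple_iff.mp hb
  obtain ⟨hxw, hwm⟩ := ordIso_triple_132_iff.mp hxwm
  obtain ⟨rfl⟩ : some x = _ := hcommon 0 0 1 rfl rfl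
  obtain ⟨rfl⟩ : some w = _ := hcommon 2 1 2 rfl rfl
  obtain ⟨rfl⟩ : some m = _ := hcommon 1 2 3 rfl rfl
  obtain ⟨A, B, C, D, rfl, rfl⟩ := repl_triple_iff.mp hrepl
  exact permEquiv_123_1S2_of_swap (hxw.trans hwm) hxw hρ₁ hτ hυ hυρ

theorem equiv132_implies_equiv1star2_general (π σ : List ℕ)
    (h : PermEquiv pat123 pat132 π σ) :
    PermEquiv pat123 pat1S2 π σ := by
  refine Relation.reflTransGen_closed ?_ π σ h
  rintro τ υ (hstep | hstep)
  exacts [permEquiv_123_1S2_of_isResult_123_132 hstep,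
    permEquiv_123_1S2_of_isResult_132_123 hstep]

/-- if two permutations of equal length are equivalent under the
(length-preserving) bidirectional replacement `123 ↔ 132`, then they are
equivalent under `123 ↔ 1★2`. -/
theorem equiv132_implies_equiv1star2 (π σ : List ℕ) (hπ : IsPermList π)
    (hσ : IsPermList σ) (hlen : π.length = σ.length)
    (h : PermEquiv pat123 pat132 π σ) :
    PermEquiv pat123 pat1S2 π σ :=
  equiv132_implies_equiv1star2_general π σ h
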